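/- Suppose ξ, ζ, η ∈ c₀⁺, 0 < λ < 1, p, q ∈ ℕ ∪ {∞}, ξ ≾_p η and ζ ≾_q η. Let r = min{p + |ξ⁻¹(0)∖ζ⁻¹(0)|, q + |ζ⁻¹(0)∖ξ⁻¹(0)|} (cardinalities possibly infinite). Then λξ + (1−λ)ζ ≾_r η. -/
import Mathlib


open Filter Finset

/-- The decreasing rearrangement of a nonnegative sequence vanishing at infinity:
`rearr ξ n` is the `(n+1)`-st largest value, defined via sups of `n`-term sums. -/
noncomputable def rearr (ξ : ℕ → ℝ) (n : ℕ) : ℝ :=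
  (⨆ s : {s : Finset ℕ // s.card = n + 1}, ∑ i ∈ s.1, ξ i)
  - (⨆ s : {s : Finset ℕ // s.card = n}, ∑ i ∈ s.1, ξ i)

/-- Membership in `c₀⁺`: nonnegative and tending to zero. -/
def InC0Pos (ξ : ℕ → ℝ) : Prop :=
  (∀ n, 0 ≤ ξ n) ∧ Tendsto ξ atTop (nhds 0)

/-- Majorization `ξ ≺ η`: dominated partial sums of decreasing rearrangements and
equal total sums (computed in `ℝ≥0∞` to handle the nonsummable case). -/
def Majorizes (ξ η : ℕ → ℝ) : Prop :=
  (∀ n, ∑ j ∈ range n, rearr ξ j ≤ ∑ j ∈ range n, rearr η j) ∧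
    (∑' j, ENNReal.ofReal (ξ j)) = ∑' j, ENNReal.ofReal (η j)

/-- `p`-majorization `ξ ≺_p η`. -/
def PMajorizes (p : ℕ) (ξ η : ℕ → ℝ) : Prop :=
  Majorizes ξ η ∧ ∃ N, ∀ n ≥ N,
    ∑ k ∈ range (n + p), rearr ξ k ≤ ∑ k ∈ range n, rearr η k

/-- `∞`-majorization `ξ ≺_∞ η`. -/
def InftyMajorizes (ξ η : ℕ → ℝ) : Prop := ∀ p : ℕ, PMajorizes p ξ η

/-- Strong majorization `ξ ≼ η`. -/
def StrongMajorizes (ξ η : ℕ → ℝ) : Prop :=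
  (∀ n, ∑ j ∈ range n, rearr ξ j ≤ ∑ j ∈ range n, rearr η j) ∧
    Filter.liminf (fun n => ∑ j ∈ range n, (rearr η j - rearr ξ j)) atTop = 0

/-- Approximate `p`-majorization `ξ ≾_p η`. -/
def ApproxPMajorizes (p : ℕ) (ξ η : ℕ → ℝ) : Prop :=
  Majorizes ξ η ∧ ∀ ε > 0, ∃ N, ∀ n ≥ N,
    ∑ k ∈ range (n + p), rearr ξ k ≤ ∑ k ∈ range n, rearr η k + ε * rearr η n

/-- Approximate `p`-majorization for an extended-natural parameter `p ∈ ℕ ∪ {∞}`: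
`ξ ≾_p η` holds iff `ξ ≾_q η` for every finite `q ≤ p`. -/
def ApproxMajE (p : ℕ∞) (ξ η : ℕ → ℝ) : Prop :=
  ∀ q : ℕ, (q : ℕ∞) ≤ p → ApproxPMajorizes q ξ η

noncomputable def supCard (χ : ℕ → ℝ) (n : ℕ) : ℝ :=
  ⨆ s : {s : Finset ℕ // s.card = n}, ∑ i ∈ s.1, χ i

instance cardSubtypeNonempty (k : ℕ) : Nonempty {s : Finset ℕ // s.card = k} :=
  ⟨⟨Finset.range k, Finset.card_range k⟩⟩

lemma supCard_zero (χ : ℕ → ℝ) : supCard χ 0 = 0 := by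
  have h : ∀ s : {s : Finset ℕ // s.card = 0}, ∑ i ∈ s.1, χ i = 0 := by
    intro s
    have : s.1 = ∅ := Finset.card_eq_zero.mp s.2
    simp [this]
  unfold supCard
  rw [show (fun s : {s : Finset ℕ // s.card = 0} => ∑ i ∈ s.1, χ i) = fun _ => (0:ℝ) from funext h]
  exact ciSup_const

lemma sum_rearr (χ : ℕ → ℝ) (n : ℕ) :
    ∑ j ∈ range n, rearr χ j = supCard χ n := by
  have h : ∀ j, rearr χ j = supCard χ (j+1) - supCard χ j := fun j => rfl
  calc ∑ j ∈ range n, rearr χ j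
      = ∑ j ∈ range n, (supCard χ (j+1) - supCard χ j) :=
        Finset.sum_congr rfl fun j _ => h j
    _ = supCard χ n - supCard χ 0 := Finset.sum_range_sub (supCard χ) n
    _ = supCard χ n := by rw [supCard_zero]; ring

lemma bddAbove_aux {χ : ℕ → ℝ} (hχ : InC0Pos χ) (k : ℕ) :
    BddAbove (Set.range fun s : {s : Finset ℕ // s.card = k} => ∑ i ∈ s.1, χ i) := by
  obtain ⟨M, hM⟩ : ∃ M, ∀ i, χ i ≤ M := by
    have h1 : ∀ᶠ i in atTop, χ i ≤ 1 := hχ.2.eventually (eventually_le_nhds one_pos)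
    obtain ⟨N, hN⟩ := eventually_atTop.mp h1
    refine ⟨max 1 (∑ i ∈ range N, χ i), fun i => ?_⟩
    rcases lt_or_ge i N with h | h
    · exact le_max_of_le_right (Finset.single_le_sum (fun j _ => hχ.1 j) (mem_range.mpr h))
    · exact le_max_of_le_left (hN i h)
  refine ⟨k * M, ?_⟩
  rintro x ⟨s, rfl⟩
  calc ∑ i ∈ s.1, χ i ≤ s.1.card • M :=
        Finset.sum_le_card_nsmul _ _ _ fun i _ => hM i
    _ = k * M := by rw [s.2]; simp [nsmul_eq_mul]

lemma sum_le_supCard {χ : ℕ → ℝ} (hχ : InC0Pos χ) (s : Finset ℕ) :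
    ∑ i ∈ s, χ i ≤ supCard χ s.card :=
  le_ciSup (bddAbove_aux hχ s.card) ⟨s, rfl⟩

lemma supCard_le {χ : ℕ → ℝ} {k : ℕ} {c : ℝ}
    (h : ∀ s : Finset ℕ, s.card = k → ∑ i ∈ s, χ i ≤ c) : supCard χ k ≤ c :=
  ciSup_le fun s => h s.1 s.2

lemma exists_finset_min_encard (Z : Set ℕ) (r : ℕ) :
    ∃ D : Finset ℕ, ↑D ⊆ Z ∧ (D.card : ℕ∞) = min Z.encard r := by
  obtain ⟨t, hts, htc⟩ := Set.exists_subset_encard_eq (min_le_left Z.encard (r : ℕ∞))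
  have hfin : t.Finite := by
    rw [← Set.encard_ne_top_iff, htc]
    exact ((min_le_right _ _).trans_lt (ENat.coe_lt_top r)).ne
  refine ⟨hfin.toFinset, by simpa using hts, ?_⟩
  rw [← hfin.encard_eq_coe_toFinset_card, htc]

lemma sub_card_le {r f : ℕ} {p e : ℕ∞} (hf : (f : ℕ∞) = min e r)
    (hr : (r : ℕ∞) ≤ p + e) : ((r - f : ℕ) : ℕ∞) ≤ p := by
  have hkey : (r : ℕ∞) ≤ p + f := by
    rcases le_total e (r : ℕ∞) with h | h
    · rw [hf, min_eq_left h]; exact hr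
    · have : (f : ℕ∞) = (r : ℕ∞) := by rw [hf, min_eq_right h]
      rw [this]; exact le_add_self
  induction p using ENat.recTopCoe with
  | top => exact le_top
  | coe m =>
    have : (r : ℕ∞) ≤ ((m + f : ℕ) : ℕ∞) := by push_cast; exact hkey
    have h2 : r ≤ m + f := Nat.cast_le.mp this
    exact Nat.cast_le.mpr (by omega)


lemma filter_card_lower (u : Finset ℕ) (P : ℕ → Prop) [DecidablePred P] (N : ℕ)
    (h : ∀ i, ¬ P i → i < N) : u.card - N ≤ (u.filter P).card := by
  have h1 := Finset.card_filter_add_card_filter_not (s := u) (p := P)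
  have h2 : (u.filter fun a => ¬ P a).card ≤ N := by
    refine le_trans (Finset.card_le_card (t := Finset.range N) ?_)
      (le_of_eq (Finset.card_range N))
    intro i hi
    rw [Finset.mem_range]
    exact h i (Finset.mem_filter.mp hi).2
  omega

theorem statement17 (ξ ζ η : ℕ → ℝ)
    (hξ : InC0Pos ξ) (hζ : InC0Pos ζ) (hη : InC0Pos η)
    (l : ℝ) (hl0 : 0 < l) (hl1 : l < 1) (p q : ℕ∞)
    (hpm : ApproxMajE p ξ η) (hqm : ApproxMajE q ζ η) :
    ApproxMajE
      (min (p + ({n | ξ n = 0} \ {n | ζ n = 0}).encard)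
           (q + ({n | ζ n = 0} \ {n | ξ n = 0}).encard))
      (fun n => l * ξ n + (1 - l) * ζ n) η := by
  intro r' hr'
  classical
  set ω : ℕ → ℝ := fun n => l * ξ n + (1 - l) * ζ n with hω_def
  have hl1' : (0:ℝ) ≤ 1 - l := by linarith
  have hωC0 : InC0Pos ω := by
    constructor
    · intro n; exact add_nonneg (mul_nonneg hl0.le (hξ.1 n)) (mul_nonneg hl1' (hζ.1 n))
    · have := (hξ.2.const_mul l).add (hζ.2.const_mul (1 - l))
      simpa using this
  obtain ⟨D1, hD1sub, hD1card⟩ :=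
    exists_finset_min_encard ({n | ξ n = 0} \ {n | ζ n = 0}) r'
  obtain ⟨D2, hD2sub, hD2card⟩ :=
    exists_finset_min_encard ({n | ζ n = 0} \ {n | ξ n = 0}) r'
  have hd1r : D1.card ≤ r' := by
    have h := hD1card ▸ min_le_right ({n | ξ n = 0} \ {n | ζ n = 0}).encard (r' : ℕ∞)
    exact_mod_cast h
  have hd2r : D2.card ≤ r' := by
    have h := hD2card ▸ min_le_right ({n | ζ n = 0} \ {n | ξ n = 0}).encard (r' : ℕ∞)
    exact_mod_cast h
  have ha1 : ((r' - D1.card : ℕ) : ℕ∞) ≤ p :=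
    sub_card_le hD1card (hr'.trans (min_le_left _ _))
  have ha2 : ((r' - D2.card : ℕ) : ℕ∞) ≤ q :=
    sub_card_le hD2card (hr'.trans (min_le_right _ _))
  have h1 := hpm (r' - D1.card) ha1
  have h2 := hqm (r' - D2.card) ha2
  refine ⟨⟨?_, ?_⟩, ?_⟩
  · -- partial sums majorization
    intro n
    rw [sum_rearr, sum_rearr]
    apply supCard_le
    intro s hs
    have hξη : supCard ξ n ≤ supCard η n := by
      rw [← sum_rearr, ← sum_rearr]; exact h1.1.1 n
    have hζη : supCard ζ n ≤ supCard η n := by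
      rw [← sum_rearr, ← sum_rearr]; exact h2.1.1 n
    have A := sum_le_supCard hξ s; rw [hs] at A
    have B := sum_le_supCard hζ s; rw [hs] at B
    have hsplit : ∑ i ∈ s, ω i = l * ∑ i ∈ s, ξ i + (1 - l) * ∑ i ∈ s, ζ i := by
      simp [hω_def, Finset.sum_add_distrib, Finset.mul_sum]
    have hA := mul_le_mul_of_nonneg_left (A.trans hξη) hl0.le
    have hB := mul_le_mul_of_nonneg_left (B.trans hζη) hl1'
    have hid : l * supCard η n + (1 - l) * supCard η n = supCard η n := by ring
    linarith [hsplit]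
  · -- tsum equality
    have hpt : ∀ j, ENNReal.ofReal (ω j)
        = ENNReal.ofReal l * ENNReal.ofReal (ξ j)
          + ENNReal.ofReal (1 - l) * ENNReal.ofReal (ζ j) := by
      intro j
      rw [← ENNReal.ofReal_mul hl0.le, ← ENNReal.ofReal_mul hl1',
        ← ENNReal.ofReal_add (mul_nonneg hl0.le (hξ.1 j)) (mul_nonneg hl1' (hζ.1 j))]
    calc ∑' j, ENNReal.ofReal (ω j)
        = ∑' j, (ENNReal.ofReal l * ENNReal.ofReal (ξ j)
            + ENNReal.ofReal (1 - l) * ENNReal.ofReal (ζ j)) := tsum_congr hpt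
      _ = ENNReal.ofReal l * ∑' j, ENNReal.ofReal (ξ j)
            + ENNReal.ofReal (1 - l) * ∑' j, ENNReal.ofReal (ζ j) := by
          rw [ENNReal.tsum_add, ENNReal.tsum_mul_left, ENNReal.tsum_mul_left]
      _ = (ENNReal.ofReal l + ENNReal.ofReal (1 - l)) * ∑' j, ENNReal.ofReal (η j) := by
          rw [h1.1.2, h2.1.2, add_mul]
      _ = ∑' j, ENNReal.ofReal (η j) := by
          rw [← ENNReal.ofReal_add hl0.le hl1']
          norm_num
  · -- the ε condition
    intro ε hε
    obtain ⟨N1, hN1⟩ := h1.2 ε hε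
    obtain ⟨N2, hN2⟩ := h2.2 ε hε
    set D := D1 ∪ D2 with hD_def
    have hωpos : ∀ j ∈ D, 0 < ω j := by
      intro j hj
      rcases Finset.mem_union.mp hj with h | h
      · have hz := hD1sub h
        have hζj : 0 < ζ j := lt_of_le_of_ne (hζ.1 j) (Ne.symm hz.2)
        have hω : ω j = (1 - l) * ζ j := by
          have : ξ j = 0 := hz.1
          simp [hω_def, this]
        rw [hω]; exact mul_pos (by linarith) hζj
      · have hz := hD2sub h
        have hξj : 0 < ξ j := lt_of_le_of_ne (hξ.1 j) (Ne.symm hz.2)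
        have hω : ω j = l * ξ j := by
          have : ζ j = 0 := hz.1
          simp [hω_def, this]
        rw [hω]; exact mul_pos hl0 hξj
    obtain ⟨c, hc0, hc⟩ : ∃ c > 0, ∀ j ∈ D, c ≤ ω j := by
      rcases Finset.eq_empty_or_nonempty D with h | h
      · exact ⟨1, one_pos, by simp [h]⟩
      · exact ⟨D.inf' h ω, (Finset.lt_inf'_iff h).mpr (fun j hj => hωpos j hj),
          fun j hj => Finset.inf'_le ω hj⟩
    obtain ⟨N0, hN0⟩ : ∃ N0, ∀ j ≥ N0, ω j < c :=
      eventually_atTop.mp (hωC0.2.eventually (eventually_lt_nhds hc0))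
    refine ⟨max (max N1 N2) (N0 + 2 * (D1.card + D2.card)), fun n hn => ?_⟩
    rw [sum_rearr, sum_rearr]
    apply supCard_le
    intro s hs
    set D' := D \ s with hD'_def
    have hscard : s.card = n + r' := hs
    have hsD : s.card - D.card ≤ (s \ D).card := Finset.le_card_sdiff D s
    have hDle : D.card ≤ D1.card + D2.card := Finset.card_union_le _ _
    have hD'le : D'.card ≤ D.card := Finset.card_le_card Finset.sdiff_subset
    have hnn : N0 + 2 * (D1.card + D2.card) ≤ n := le_trans (le_max_right _ _) hn
    have hfil : (s \ D).card - N0 ≤ ((s \ D).filter (fun i => ω i < c)).card := by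
      refine filter_card_lower _ _ N0 (fun i hi => ?_)
      by_contra h
      exact hi (hN0 i (by omega))
    have hcard1 : D'.card ≤ ((s \ D).filter (fun i => ω i < c)).card := by omega
    obtain ⟨T, hTsub, hTcard⟩ := Finset.exists_subset_card_eq hcard1
    have hTs : T ⊆ s :=
      hTsub.trans ((Finset.filter_subset _ _).trans Finset.sdiff_subset)
    set t := (s \ T) ∪ D' with ht_def
    have hdisj2 : Disjoint (s \ T) D' :=
      Finset.sdiff_disjoint.symm.mono_left Finset.sdiff_subset
    have htcard : t.card = n + r' := by
      have hu : t.card = (s \ T).card + D'.card := Finset.card_union_of_disjoint hdisj2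
      have hsd := Finset.card_sdiff_of_subset hTs
      have hle := Finset.card_le_card hTs
      omega
    have hsum_st : ∑ i ∈ s, ω i ≤ ∑ i ∈ t, ω i := by
      have hT : ∑ i ∈ T, ω i ≤ D'.card • c := by
        rw [← hTcard]
        exact Finset.sum_le_card_nsmul T ω c
          (fun i hi => le_of_lt (Finset.mem_filter.mp (hTsub hi)).2)
      have hD'sum : D'.card • c ≤ ∑ i ∈ D', ω i :=
        Finset.card_nsmul_le_sum D' ω c (fun j hj => hc j (Finset.mem_sdiff.mp hj).1)
      have h4 : ∑ i ∈ s \ T, ω i + ∑ i ∈ T, ω i = ∑ i ∈ s, ω i := Finset.sum_sdiff hTs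
      have h5 : ∑ i ∈ t, ω i = ∑ i ∈ s \ T, ω i + ∑ i ∈ D', ω i := Finset.sum_union hdisj2
      linarith
    have hDt : D ⊆ t := by
      intro j hj
      by_cases hjs : j ∈ s
      · refine Finset.mem_union_left _ (Finset.mem_sdiff.mpr ⟨hjs, fun hT => ?_⟩)
        exact (Finset.mem_sdiff.mp (Finset.filter_subset _ _ (hTsub hT))).2 hj
      · exact Finset.mem_union_right _ (Finset.mem_sdiff.mpr ⟨hj, hjs⟩)
    have hD1t : D1 ⊆ t := Finset.subset_union_left.trans hDt
    have hD2t : D2 ⊆ t := Finset.subset_union_right.trans hDt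
    have hNle : n ≥ N1 := le_trans (le_trans (le_max_left _ _) (le_max_left _ _)) hn
    have hNle2 : n ≥ N2 := le_trans (le_trans (le_max_right _ _) (le_max_left _ _)) hn
    have hXξ : ∑ i ∈ t, ξ i ≤ supCard η n + ε * rearr η n := by
      have hsum_t : ∑ i ∈ t, ξ i = ∑ i ∈ t \ D1, ξ i := by
        refine (Finset.sum_subset Finset.sdiff_subset ?_).symm
        intro i hit hni
        have hiD1 : i ∈ D1 := by
          by_contra h
          exact hni (Finset.mem_sdiff.mpr ⟨hit, h⟩)
        exact (hD1sub hiD1).1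
      have hcξ : (t \ D1).card = n + (r' - D1.card) := by
        have := Finset.card_sdiff_of_subset hD1t
        have := Finset.card_le_card hD1t
        omega
      rw [hsum_t]
      have h := sum_le_supCard hξ (t \ D1)
      rw [hcξ] at h
      refine h.trans ?_
      have h' := hN1 n hNle
      rw [sum_rearr, sum_rearr] at h'
      exact h'
    have hXζ : ∑ i ∈ t, ζ i ≤ supCard η n + ε * rearr η n := by
      have hsum_t : ∑ i ∈ t, ζ i = ∑ i ∈ t \ D2, ζ i := by
        refine (Finset.sum_subset Finset.sdiff_subset ?_).symm
        intro i hit hni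
        have hiD2 : i ∈ D2 := by
          by_contra h
          exact hni (Finset.mem_sdiff.mpr ⟨hit, h⟩)
        exact (hD2sub hiD2).1
      have hcζ : (t \ D2).card = n + (r' - D2.card) := by
        have := Finset.card_sdiff_of_subset hD2t
        have := Finset.card_le_card hD2t
        omega
      rw [hsum_t]
      have h := sum_le_supCard hζ (t \ D2)
      rw [hcζ] at h
      refine h.trans ?_
      have h' := hN2 n hNle2
      rw [sum_rearr, sum_rearr] at h'
      exact h'
    have hsplitt : ∑ i ∈ t, ω i = l * ∑ i ∈ t, ξ i + (1 - l) * ∑ i ∈ t, ζ i := by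
      simp [hω_def, Finset.sum_add_distrib, Finset.mul_sum]
    have hA := mul_le_mul_of_nonneg_left hXξ hl0.le
    have hB := mul_le_mul_of_nonneg_left hXζ hl1'
    have hid : l * (supCard η n + ε * rearr η n) + (1 - l) * (supCard η n + ε * rearr η n)
        = supCard η n + ε * rearr η n := by ring
    linarith
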